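/- Let A be a nonempty set of qubits, j ∉ A, and let S be the Pauli word with Z on every qubit of A ∪ {j} and identity elsewhere, and P = P(A, j) the stabilizer-rotation Pauli word (Z on every qubit of A, Y on j, identity elsewhere). Then P anticommutes with S, and the π/4 Pauli rotation maps the stabilizer S to a single-qubit Pauli X: exp(i(π/4)P) · S · exp(−i(π/4)P) = −X_j, where X_j is the Pauli word with X on qubit j and identity elsewhere. -/

import Mathlib

/-! `P = P(A, j)` and `S` are tensor products whose factors commute on every qubit except `j`,
where `Y` and `Z` anticommute; hence `P S = -S P`, and `P² = 1` factorwise. For an involution `P`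
anticommuting with `S`, the series `exp(iθP) = cos θ + i sin θ P` gives
`exp(iθP) S exp(-iθP) = cos 2θ S + i sin 2θ P S`, which at `θ = π/4` is `i P S`;
finally `P S = i X_j` factorwise, because `Y Z = i X`. -/

open Matrix Complex Real

/-- The single-qubit identity matrix. -/
noncomputable def PauliI : Matrix (Fin 2) (Fin 2) ℂ := !![1, 0; 0, 1]

/-- The single-qubit Pauli X matrix. -/
noncomputable def PauliX : Matrix (Fin 2) (Fin 2) ℂ := !![0, 1; 1, 0]

/-- The single-qubit Pauli Y matrix. -/
noncomputable def PauliY : Matrix (Fin 2) (Fin 2) ℂ := !![0, -Complex.I; Complex.I, 0]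

/-- The single-qubit Pauli Z matrix. -/
noncomputable def PauliZ : Matrix (Fin 2) (Fin 2) ℂ := !![1, 0; 0, -1]

/-- The Pauli word `W(p)`: the `n`-fold Kronecker/tensor product of the single-qubit
matrices `p i`, i.e. the `2^n × 2^n` matrix with entries `W(p)(a,b) = ∏ i, p i (a i) (b i)`. -/
noncomputable def PauliWord (n : ℕ) (p : Fin n → Matrix (Fin 2) (Fin 2) ℂ) :
    Matrix (Fin n → Fin 2) (Fin n → Fin 2) ℂ :=
  Matrix.of fun a b => ∏ i, p i (a i) (b i)

/-- The stabilizer-rotation Pauli word `P(A, j)`: Pauli Z on every qubit of `A`,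
Pauli Y on qubit `j`, and identity elsewhere. -/
noncomputable def stabRot (n : ℕ) (A : Finset (Fin n)) (j : Fin n) :
    Matrix (Fin n → Fin 2) (Fin n → Fin 2) ℂ :=
  PauliWord n fun i => if i = j then PauliY else if i ∈ A then PauliZ else PauliI

/-- The computational basis vector `e_b` indexed by the bit string `b`. -/
noncomputable def basisVec (n : ℕ) (b : Fin n → Fin 2) : (Fin n → Fin 2) → ℂ :=
  fun a => if a = b then 1 else 0

section InvolutionExp

variable {𝔸 : Type*} [Ring 𝔸] [Algebra ℂ 𝔸] [TopologicalSpace 𝔸] [IsTopologicalRing 𝔸]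
  [ContinuousSMul ℂ 𝔸] [T2Space 𝔸]

theorem exp_mul_I_smul_of_mul_self_eq_one {P : 𝔸} (hP : P * P = 1) (z : ℂ) :
    NormedSpace.exp ((z * I) • P) = cos z • (1 : 𝔸) + (sin z * I) • P := by
  have hP_even (k : ℕ) : P ^ (2 * k) = 1 := by rw [pow_mul, sq, hP, one_pow]
  have hterm (m : ℕ) :
      ((m.factorial : ℂ)⁻¹) • ((z * I) • P) ^ m = ((z * I) ^ m / m.factorial) • P ^ m := by
    rw [smul_pow, smul_smul, div_eq_inv_mul]
  have hcos : HasSum (fun k : ℕ => (((2 * k).factorial : ℂ)⁻¹) • ((z * I) • P) ^ (2 * k))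
      (cos z • (1 : 𝔸)) := by
    simp only [hterm, hP_even]
    exact (Complex.hasSum_cos' z).smul_const 1
  have hsin : HasSum (fun k : ℕ => (((2 * k + 1).factorial : ℂ)⁻¹) • ((z * I) • P) ^ (2 * k + 1))
      ((sin z * I) • P) := by
    simp only [hterm, pow_succ P, hP_even, one_mul]
    simpa only [div_mul_cancel₀ _ I_ne_zero] using
      ((Complex.hasSum_sin' z).mul_right I).smul_const P
  rw [NormedSpace.exp_eq_tsum ℂ]
  exact (HasSum.even_add_odd (f := fun m => (m.factorial : ℂ)⁻¹ • ((z * I) • P) ^ m)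
    hcos hsin).tsum_eq

theorem exp_mul_I_smul_conj_of_anticommute {P S : 𝔸} (hP : P * P = 1)
    (hPS : P * S = -(S * P)) (z : ℂ) :
    NormedSpace.exp ((z * I) • P) * S * NormedSpace.exp ((-(z * I)) • P) =
      cos (2 * z) • S + (sin (2 * z) * I) • (P * S) := by
  have hSP : S * P = -(P * S) := by rw [hPS, neg_neg]
  have hPSP : P * S * P = -S := by rw [hPS, neg_mul, mul_assoc, hP, mul_one]
  rw [← neg_mul, exp_mul_I_smul_of_mul_self_eq_one hP, exp_mul_I_smul_of_mul_self_eq_one hP,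
    Complex.cos_neg, Complex.sin_neg, Complex.cos_two_mul', Complex.sin_two_mul]
  simp only [add_mul, mul_add, smul_mul_assoc, mul_smul_comm, one_mul, mul_one, hPSP, hSP]
  match_scalars
  · linear_combination (sin z ^ 2) * I_mul_I
  · ring

end InvolutionExp

theorem PauliI_eq_one : PauliI = 1 := Matrix.one_fin_two.symm

theorem PauliY_mul_self : PauliY * PauliY = 1 := by
  ext a b; fin_cases a <;> fin_cases b <;> simp [PauliY]

theorem PauliZ_mul_self : PauliZ * PauliZ = 1 := by
  ext a b; fin_cases a <;> fin_cases b <;> simp [PauliZ]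

theorem PauliY_mul_PauliZ : PauliY * PauliZ = I • PauliX := by
  ext a b; fin_cases a <;> fin_cases b <;> simp [PauliX, PauliY, PauliZ]

theorem PauliZ_mul_PauliY : PauliZ * PauliY = -(PauliY * PauliZ) := by
  ext a b; fin_cases a <;> fin_cases b <;> simp [PauliY, PauliZ]

section PauliWord

variable {n : ℕ}

theorem PauliWord_mul (p q : Fin n → Matrix (Fin 2) (Fin 2) ℂ) :
    PauliWord n p * PauliWord n q = PauliWord n fun i => p i * q i := by
  ext a b
  simp only [PauliWord, Matrix.mul_apply, Matrix.of_apply, Fintype.prod_sum,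
    Finset.prod_mul_distrib]

theorem PauliWord_one : PauliWord n (fun _ => 1) = 1 := by
  ext a b
  simp [PauliWord, Matrix.one_apply, Finset.prod_boole, funext_iff]

theorem PauliWord_smul (c : Fin n → ℂ) (p : Fin n → Matrix (Fin 2) (Fin 2) ℂ) :
    PauliWord n (fun i => c i • p i) = (∏ i, c i) • PauliWord n p := by
  ext a b
  simp [PauliWord, Finset.prod_mul_distrib]

theorem PauliWord_mul_eq_neg_of_anticommute_at (p q : Fin n → Matrix (Fin 2) (Fin 2) ℂ)
    (j : Fin n) (hj : p j * q j = -(q j * p j)) (hcomm : ∀ i ≠ j, Commute (p i) (q i)) :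
    PauliWord n p * PauliWord n q = -(PauliWord n q * PauliWord n p) := by
  have hfactors : (fun i => p i * q i) = fun i => (if i = j then -1 else 1 : ℂ) • (q i * p i) := by
    funext i
    by_cases hij : i = j
    · subst hij; simp [hj]
    · simp [hij, (hcomm i hij).eq]
  rw [PauliWord_mul, PauliWord_mul, hfactors, PauliWord_smul, Finset.prod_ite_eq']
  simp

end PauliWord

section StabilizerRotation

variable (n : ℕ) (A : Finset (Fin n)) (j : Fin n)

theorem stabRot_mul_self : stabRot n A j * stabRot n A j = 1 := by
  rw [stabRot, PauliWord_mul, ← PauliWord_one]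
  congr 1
  funext i
  split_ifs <;> simp [PauliY_mul_self, PauliZ_mul_self, PauliI_eq_one]

theorem stabRot_mul_Z_stabilizer :
    stabRot n A j * PauliWord n (fun i => if i ∈ insert j A then PauliZ else PauliI) =
      I • PauliWord n fun i => if i = j then PauliX else PauliI := by
  have hfactors := PauliWord_smul (fun i => if i = j then I else 1)
    (fun i => if i = j then PauliX else PauliI)
  rw [Finset.prod_ite_eq', if_pos (Finset.mem_univ j)] at hfactors
  rw [stabRot, PauliWord_mul, ← hfactors]
  congr 1
  funext i
  by_cases hij : i = j
  · simp [hij, PauliY_mul_PauliZ]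
  · by_cases hiA : i ∈ A <;> simp [hij, hiA, PauliZ_mul_self, PauliI_eq_one]

theorem stabRot_anticommute_Z_stabilizer :
    stabRot n A j * PauliWord n (fun i => if i ∈ insert j A then PauliZ else PauliI) =
      -(PauliWord n (fun i => if i ∈ insert j A then PauliZ else PauliI) * stabRot n A j) := by
  refine PauliWord_mul_eq_neg_of_anticommute_at _ _ j ?_ fun i hij => ?_
  · simp [PauliZ_mul_PauliY]
  · by_cases hiA : i ∈ A <;> simp [hij, hiA, Commute.refl]

end StabilizerRotation

theorem stabRot_rotation_maps_Z_stabilizer_to_X_general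
    (n : ℕ) (A : Finset (Fin n)) (j : Fin n) :
    let S := PauliWord n fun i => if i ∈ insert j A then PauliZ else PauliI
    let P := stabRot n A j
    P * S = -(S * P) ∧
      NormedSpace.exp (((Real.pi / 4 : ℂ) * Complex.I) • P) * S *
          NormedSpace.exp ((-((Real.pi / 4 : ℂ) * Complex.I)) • P) =
        -(PauliWord n fun i => if i = j then PauliX else PauliI) := by
  intro S P
  have hPS : P * S = -(S * P) := stabRot_anticommute_Z_stabilizer n A j
  refine ⟨hPS, ?_⟩
  rw [exp_mul_I_smul_conj_of_anticommute (stabRot_mul_self n A j) hPS,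
    show 2 * (π / 4 : ℂ) = π / 2 by ring, Complex.cos_pi_div_two, Complex.sin_pi_div_two,
    stabRot_mul_Z_stabilizer, smul_smul]
  simp

/-- `P(A, j)` anticommutes with the Z-type stabilizer `S` supported on
`A ∪ {j}`, and the `π/4` rotation generated by `P(A, j)` maps `S` to `-X_j`. -/
theorem stabRot_rotation_maps_Z_stabilizer_to_X
    (n : ℕ) (A : Finset (Fin n)) (hA : A.Nonempty) (j : Fin n) (hj : j ∉ A) :
    let S := PauliWord n fun i => if i ∈ insert j A then PauliZ else PauliI
    let P := stabRot n A j
    P * S = -(S * P) ∧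
      NormedSpace.exp (((Real.pi / 4 : ℂ) * Complex.I) • P) * S *
          NormedSpace.exp ((-((Real.pi / 4 : ℂ) * Complex.I)) • P) =
        -(PauliWord n fun i => if i = j then PauliX else PauliI) :=
  stabRot_rotation_maps_Z_stabilizer_to_X_general n A j
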